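/- arXiv:0910.1230 — 3 statements merged into one kernel-verified Lean document; each statement's English description precedes it below -/
import Mathlib

section
/- Let (u_n) be a sequence of real numbers, (a_p) and (g_p) nonnegative sequences with (a_n + g_n)/n → 0, such that u_{n+p} ≤ u_n + u_p + g_p + a_p for all n,p ≥ 1, and inf_n u_n/n > -∞. Then u_n/n converges to a finite limit. -/
/-!
Put `w p = u p + g p + a p`, so that `u (n + p) ≤ u n + w p`, and let `L = inf_p w p / p`.
Since `(w n - u n) / n = (a n + g n) / n → 0`, eventually `u n / n ≥ L - ε`.
Conversely, if `w p / p < l` then `u n - n * w p / p` decreases along every residue class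
modulo `p`, so it is bounded above and `u n / n < l` eventually.
-/

open Filter Set Topology

lemma exists_forall_le_of_apply_add_le {α : Type*} [SemilatticeSup α] [Nonempty α]
    {φ : ℕ → α} {p : ℕ} (hp : 0 < p) (hstep : ∀ n, 1 ≤ n → φ (n + p) ≤ φ n) :
    ∃ K, ∀ n, 1 ≤ n → φ n ≤ K := by
  obtain ⟨K, hK⟩ := ((finite_Icc 1 p).image φ).bddAbove
  refine ⟨K, fun n hn => ?_⟩
  induction n using Nat.strong_induction_on with
  | _ n ih =>
    by_cases hnp : n ≤ p
    · exact hK (mem_image_of_mem φ ⟨hn, hnp⟩)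
    · obtain ⟨m, rfl⟩ : ∃ m, n = m + p := ⟨n - p, by omega⟩
      exact (hstep m (by omega)).trans (ih m (by omega) (by omega))

lemma eventually_div_lt_of_apply_add_le {u : ℕ → ℝ} {p : ℕ} (hp : 0 < p) {c l : ℝ}
    (hstep : ∀ n, 1 ≤ n → u (n + p) ≤ u n + c) (hl : c / p < l) :
    ∀ᶠ n in atTop, u n / n < l := by
  obtain ⟨K, hK⟩ := exists_forall_le_of_apply_add_le (φ := fun n => u n - n * (c / p)) hp
    fun n hn => by
      have hpc : (p : ℝ) * (c / p) = c := mul_div_cancel₀ c (by positivity)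
      push_cast
      linarith [hstep n hn]
  have hbound : Tendsto (fun n : ℕ => K / n + c / p) atTop (𝓝 (c / p)) := by
    simpa using (tendsto_const_div_atTop_nhds_zero_nat K).add_const (c / p)
  filter_upwards [hbound.eventually (gt_mem_nhds hl), eventually_ge_atTop 1] with n hlt hn
  have hn' : (0 : ℝ) < n := by exact_mod_cast hn
  calc u n / n ≤ K / n + c / p := by
        rw [div_add' _ _ _ hn'.ne', div_le_div_iff_of_pos_right hn']
        linarith [hK n hn]
    _ < l := hlt

theorem tendsto_div_iInf_of_apply_add_le (u w : ℕ → ℝ)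
    (hstep : ∀ n p, 1 ≤ n → 1 ≤ p → u (n + p) ≤ u n + w p)
    (hdefect : Tendsto (fun n : ℕ => (w n - u n) / n) atTop (𝓝 0))
    (hbdd : BddBelow (range fun p : ℕ => w (p + 1) / (p + 1))) :
    Tendsto (fun n : ℕ => u n / n) atTop (𝓝 (⨅ p : ℕ, w (p + 1) / (p + 1))) := by
  set L := ⨅ p : ℕ, w (p + 1) / (p + 1)
  refine tendsto_order.2 ⟨fun l hl => ?_, fun l hl => ?_⟩
  · filter_upwards [hdefect.eventually (gt_mem_nhds (sub_pos.2 hl)), eventually_ge_atTop 1]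
      with n hsmall hn
    have hLn : L ≤ w n / n := by
      obtain ⟨m, rfl⟩ : ∃ m, n = m + 1 := ⟨n - 1, by omega⟩
      have := ciInf_le hbdd m
      push_cast at this ⊢
      exact this
    have hsplit : u n / n = w n / n - (w n - u n) / n := by ring
    linarith
  · obtain ⟨p, hp⟩ := exists_lt_of_ciInf_lt hl
    exact eventually_div_lt_of_apply_add_le (p := p + 1) p.succ_pos
      (fun n hn => hstep n (p + 1) hn p.succ_pos) (by exact_mod_cast hp)

/-- Generalized Fekete lemma for almost subadditive sequences. -/
theorem almost_subadditive_fekete (u a g : ℕ → ℝ)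
    (ha : ∀ p, 0 ≤ a p) (hg : ∀ p, 0 ≤ g p)
    (hlim : Tendsto (fun n : ℕ => (a n + g n) / n) atTop (nhds 0))
    (hsub : ∀ n p, 1 ≤ n → 1 ≤ p → u (n + p) ≤ u n + u p + g p + a p)
    (hbdd : BddBelow (Set.range fun n : ℕ => u (n + 1) / (n + 1))) :
    ∃ L : ℝ, Tendsto (fun n : ℕ => u n / n) atTop (nhds L) := by
  let w p := u p + g p + a p
  have hdefect : (fun n : ℕ => (w n - u n) / n) = fun n => (a n + g n) / n := by
    funext n
    ring
  have hwbdd : BddBelow (range fun p : ℕ => w (p + 1) / (p + 1)) := by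
    obtain ⟨b, hb⟩ := hbdd
    refine ⟨b, ?_⟩
    rintro _ ⟨p, rfl⟩
    refine (hb ⟨p, rfl⟩).trans (div_le_div_of_nonneg_right ?_ (by positivity))
    linarith [ha (p + 1), hg (p + 1)]
  exact ⟨_, tendsto_div_iInf_of_apply_add_le u w (fun n p hn hp => by linarith [hsub n p hn hp])
    (hdefect ▸ hlim) hwbdd⟩
end

section
/- Let (f_n)_{n≥1} be integrable random variables on a probability space with measure-preserving transformations (θ_n), satisfying f_{n+p} ≤ f_n + f_p ∘ θ_n + g_p ∘ θ_n + r_{n,p}, where g_p ≥ 0 with E[g_p]/p → 0, and E[(r_{n,p}^+)^α] ≤ C_p for some α > 1 with Σ_p C_p/p^α < ∞, and c = inf_n E[f_n]/n > -∞. Then E[f_n]/n converges to a finite limit μ. -/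
/-!
Integrating the pathwise inequality, with `θ n` preserving `μ`, gives
`E f (n + p) ≤ E f n + E f p + E g p + E (r n p)⁺`, and Lyapunov's inequality bounds the last
term by `C p ^ (1 / α)`, which is `o(p)` because `C p / p ^ α` is summable. So `u n = E f n` is
subadditive up to an `o(p)` error `h p`. Writing `n = s + q p` with `1 ≤ s ≤ p` shows
`limsup u n / n ≤ (u p + h p) / p` for every `p`, and choosing `p` with `u p / p` near the
`liminf` and `h p / p` small closes the gap (generalized Fekete lemma).
-/

open MeasureTheory Filter Topology

theorem MeasureTheory.MeasurePreserving.integral_comp_of_aestronglyMeasurable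
    {α β E : Type*} [MeasurableSpace α] [MeasurableSpace β] [NormedAddCommGroup E]
    [NormedSpace ℝ E] {μ : Measure α} {ν : Measure β} {f : α → β} (hf : MeasurePreserving f μ ν)
    {g : β → E} (hg : AEStronglyMeasurable g ν) :
    ∫ x, g (f x) ∂μ = ∫ y, g y ∂ν := by
  rw [← hf.map_eq] at hg ⊢
  exact (integral_map hf.measurable.aemeasurable hg).symm

section Moments

variable {Ω : Type*} [MeasurableSpace Ω] {μ : Measure Ω} [IsProbabilityMeasure μ]

theorem integral_le_rpow_inv_of_lintegral_rpow_le {h : Ω → ℝ} {α C : ℝ}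
    (hint : Integrable h μ) (hnn : 0 ≤ h) (hα : 1 ≤ α) (hC : 0 ≤ C)
    (hb : ∫⁻ ω, ENNReal.ofReal (h ω ^ α) ∂μ ≤ ENNReal.ofReal C) :
    ∫ ω, h ω ∂μ ≤ C ^ α⁻¹ := by
  have hα0 : 0 < α := zero_lt_one.trans_le hα
  have hαne : ENNReal.ofReal α ≠ 0 := by simpa using hα0
  have hL1 : ENNReal.ofReal (∫ ω, h ω ∂μ) = eLpNorm h 1 μ := by
    rw [ofReal_integral_eq_lintegral_ofReal hint (.of_forall hnn),
      eLpNorm_one_eq_lintegral_enorm]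
    exact lintegral_congr fun ω => (Real.enorm_eq_ofReal (hnn ω)).symm
  have hLα : eLpNorm h (ENNReal.ofReal α) μ = (∫⁻ ω, ENNReal.ofReal (h ω ^ α) ∂μ) ^ α⁻¹ := by
    rw [eLpNorm_eq_lintegral_rpow_enorm_toReal hαne ENNReal.ofReal_ne_top,
      ENNReal.toReal_ofReal hα0.le, one_div]
    congr 1
    refine lintegral_congr fun ω => ?_
    rw [Real.enorm_eq_ofReal (hnn ω), ENNReal.ofReal_rpow_of_nonneg (hnn ω) hα0.le]
  have hmono : eLpNorm h 1 μ ≤ eLpNorm h (ENNReal.ofReal α) μ :=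
    eLpNorm_le_eLpNorm_of_exponent_le (by simpa using hα) hint.1
  have : ENNReal.ofReal (∫ ω, h ω ∂μ) ≤ ENNReal.ofReal (C ^ α⁻¹) := by
    rw [hL1, ← ENNReal.ofReal_rpow_of_nonneg hC (by positivity)]
    exact hmono.trans (hLα ▸ ENNReal.rpow_le_rpow hb (by positivity))
  exact (ENNReal.ofReal_le_ofReal_iff (by positivity)).mp this

theorem integral_le_integral_add_rpow_inv {F G R : Ω → ℝ} {α C : ℝ}
    (hF : Integrable F μ) (hG : Integrable G μ) (hα : 1 ≤ α) (hC : 0 ≤ C)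
    (hle : ∀ ω, F ω ≤ G ω + R ω)
    (hR : ∫⁻ ω, ENNReal.ofReal (max (R ω) 0 ^ α) ∂μ ≤ ENNReal.ofReal C) :
    ∫ ω, F ω ∂μ ≤ ∫ ω, G ω ∂μ + C ^ α⁻¹ := by
  have hD : Integrable (F - G) μ := hF.sub hG
  have hDpos : ∫ ω, max ((F - G) ω) 0 ∂μ ≤ C ^ α⁻¹ := by
    refine integral_le_rpow_inv_of_lintegral_rpow_le hD.pos_part (fun ω => le_max_right _ _)
      hα hC (le_trans (lintegral_mono fun ω => ENNReal.ofReal_le_ofReal ?_) hR)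
    refine Real.rpow_le_rpow (le_max_right _ _) (max_le_max ?_ le_rfl) (by linarith)
    simp only [Pi.sub_apply]
    linarith [hle ω]
  have : ∫ ω, (F - G) ω ∂μ ≤ ∫ ω, max ((F - G) ω) 0 ∂μ :=
    integral_mono hD hD.pos_part fun ω => le_max_left _ _
  rw [integral_sub' hF hG] at this
  linarith

end Moments

theorem tendsto_rpow_inv_div_of_tendsto_div_rpow {C : ℕ → ℝ} {α : ℝ} (hα : 0 < α)
    (hC0 : ∀ p, 0 ≤ C p) (hC : Tendsto (fun p : ℕ => C p / (p : ℝ) ^ α) atTop (𝓝 0)) :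
    Tendsto (fun p : ℕ => C p ^ α⁻¹ / p) atTop (𝓝 0) := by
  have := hC.rpow_const (p := α⁻¹) (Or.inr (by positivity))
  rw [Real.zero_rpow (by positivity)] at this
  refine this.congr fun p => ?_
  rw [Real.div_rpow (hC0 p) (by positivity), ← Real.rpow_mul (Nat.cast_nonneg p),
    mul_inv_cancel₀ hα.ne', Real.rpow_one]

def AlmostSubadditive (u h : ℕ → ℝ) : Prop :=
  ∀ n p, 1 ≤ n → 1 ≤ p → u (n + p) ≤ u n + u p + h p

namespace AlmostSubadditive

variable {u h : ℕ → ℝ}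

theorem le_add_mul (hu : AlmostSubadditive u h) {p s : ℕ} (hp : 1 ≤ p) (hs : 1 ≤ s) (q : ℕ) :
    u (s + q * p) ≤ u s + q * (u p + h p) := by
  induction q with
  | zero => simp
  | succ q ih =>
    have hstep := hu (s + q * p) p (by omega) hp
    rw [show s + (q + 1) * p = s + q * p + p by ring]
    push_cast
    linarith

theorem exists_le_add_mul (hu : AlmostSubadditive u h) {p : ℕ} (hp : 1 ≤ p) :
    ∃ M, ∀ n, 1 ≤ n → u n ≤ M + n * ((u p + h p) / p) := by
  set a := (u p + h p) / p
  have hne : (Finset.Icc 1 p).Nonempty := ⟨1, by simp [hp]⟩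
  refine ⟨(Finset.Icc 1 p).sup' hne fun s => u s - s * a, fun n hn => ?_⟩
  obtain ⟨s, q, hs, hn_eq⟩ : ∃ s q, s ∈ Finset.Icc 1 p ∧ s + q * p = n := by
    refine ⟨(n - 1) % p + 1, (n - 1) / p, Finset.mem_Icc.2 ⟨by omega, Nat.mod_lt _ hp⟩, ?_⟩
    have := Nat.mod_add_div (n - 1) p
    rw [Nat.mul_comm] at this
    omega
  have hqp : (q : ℝ) * (u p + h p) = (n - s) * a := by
    have : (q : ℝ) * p = n - s := by rw [← hn_eq]; push_cast; ring
    rw [← this, mul_assoc, mul_div_cancel₀ _ (by positivity)]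
  calc u n ≤ u s + q * (u p + h p) := hn_eq ▸ hu.le_add_mul hp (Finset.mem_Icc.1 hs).1 q
    _ = (u s - s * a) + n * a := by rw [hqp]; ring
    _ ≤ _ := by gcongr; exact Finset.le_sup' (fun s => u s - s * a) hs

theorem exists_tendsto_ge_div (hu : AlmostSubadditive u h) {p : ℕ} (hp : 1 ≤ p) :
    ∃ v : ℕ → ℝ, Tendsto v atTop (𝓝 ((u p + h p) / p)) ∧
      (fun n => u n / n) ≤ᶠ[atTop] v := by
  obtain ⟨M, hM⟩ := hu.exists_le_add_mul hp
  refine ⟨fun n => (u p + h p) / p + M / n, ?_, ?_⟩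
  · simpa using tendsto_const_nhds.add
      (tendsto_const_nhds.div_atTop (tendsto_natCast_atTop_atTop (R := ℝ)))
  · filter_upwards [eventually_ge_atTop 1] with n hn
    have hn0 : (0 : ℝ) < n := by exact_mod_cast hn
    rw [div_le_iff₀ hn0, add_mul, div_mul_cancel₀ _ hn0.ne']
    linarith [hM n hn]

theorem isBoundedUnder_le_div (hu : AlmostSubadditive u h) :
    IsBoundedUnder (· ≤ ·) atTop fun n => u n / n := by
  obtain ⟨v, hv, huv⟩ := hu.exists_tendsto_ge_div le_rfl
  exact hv.isBoundedUnder_le.mono_le huv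

theorem limsup_div_le (hu : AlmostSubadditive u h)
    (hbdd : IsBoundedUnder (· ≥ ·) atTop fun n => u n / n) {p : ℕ} (hp : 1 ≤ p) :
    limsup (fun n => u n / n) atTop ≤ (u p + h p) / p := by
  obtain ⟨v, hv, huv⟩ := hu.exists_tendsto_ge_div hp
  rw [← hv.limsup_eq]
  exact limsup_le_limsup huv hbdd.isCoboundedUnder_le hv.isBoundedUnder_le

theorem tendsto_div_liminf (hu : AlmostSubadditive u h)
    (hh : Tendsto (fun p => h p / p) atTop (𝓝 0))
    (hbdd : IsBoundedUnder (· ≥ ·) atTop fun n => u n / n) :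
    Tendsto (fun n => u n / n) atTop (𝓝 (liminf (fun n => u n / n) atTop)) := by
  have hbdd' := hu.isBoundedUnder_le_div
  refine tendsto_of_le_liminf_of_limsup_le le_rfl ?_ hbdd' hbdd
  refine le_of_forall_pos_le_add fun ε hε => ?_
  have hfreq : ∃ᶠ p in atTop, u p / p < liminf (fun n => u n / n) atTop + ε / 2 :=
    frequently_lt_of_liminf_lt hbdd'.isCoboundedUnder_ge (by linarith)
  have hev : ∀ᶠ p in atTop, h p / p < ε / 2 ∧ 1 ≤ p :=
    (hh.eventually (gt_mem_nhds (half_pos hε))).and (eventually_ge_atTop 1)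
  obtain ⟨p, hup, hhp, hp⟩ := (hfreq.and_eventually hev).exists
  calc limsup (fun n => u n / n) atTop ≤ (u p + h p) / p := hu.limsup_div_le hbdd hp
    _ = u p / p + h p / p := add_div _ _ _
    _ ≤ _ := by linarith

end AlmostSubadditive

theorem almost_subadditive_expectation_converges_general {Ω : Type*} [MeasurableSpace Ω]
    (μ : Measure Ω) [IsProbabilityMeasure μ]
    (θ : ℕ → Ω → Ω) (hθ : ∀ n, MeasurePreserving (θ n) μ μ)
    (f g : ℕ → Ω → ℝ) (r : ℕ → ℕ → Ω → ℝ)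
    (hf : ∀ n, Integrable (f n) μ)
    (hgint : ∀ p, Integrable (g p) μ)
    (hgE : Tendsto (fun p : ℕ => (∫ ω, g p ω ∂μ) / p) atTop (nhds 0))
    (α : ℝ) (hα : 1 < α) (C : ℕ → ℝ) (hC0 : ∀ p, 0 ≤ C p)
    (hr : ∀ n p, 1 ≤ n → 1 ≤ p →
      ∫⁻ ω, ENNReal.ofReal (max (r n p ω) 0 ^ α) ∂μ ≤ ENNReal.ofReal (C p))
    (hCsum : Summable fun p : ℕ => C p / (p : ℝ) ^ α)
    (hsub : ∀ n p, 1 ≤ n → 1 ≤ p → ∀ ω,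
      f (n + p) ω ≤ f n ω + f p (θ n ω) + g p (θ n ω) + r n p ω)
    (hc : BddBelow (Set.range fun n : ℕ => (∫ ω, f (n + 1) ω ∂μ) / (n + 1))) :
    ∃ L : ℝ, Tendsto (fun n : ℕ => (∫ ω, f n ω ∂μ) / n) atTop (nhds L) := by
  have hshift : ∀ n {φ : Ω → ℝ}, Integrable φ μ →
      Integrable (fun ω => φ (θ n ω)) μ ∧ ∫ ω, φ (θ n ω) ∂μ = ∫ ω, φ ω ∂μ := fun n _ hφ =>
    ⟨(hθ n).integrable_comp_of_integrable hφ, (hθ n).integral_comp_of_aestronglyMeasurable hφ.1⟩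
  have hsubE : AlmostSubadditive (fun n => ∫ ω, f n ω ∂μ)
      (fun p => ∫ ω, g p ω ∂μ + C p ^ α⁻¹) := by
    intro n p hn hp
    obtain ⟨hfθ, hfθ_eq⟩ := hshift n (hf p)
    obtain ⟨hgθ, hgθ_eq⟩ := hshift n (hgint p)
    have hsum : Integrable (fun ω => f n ω + f p (θ n ω)) μ := (hf n).add hfθ
    have := integral_le_integral_add_rpow_inv (G := fun ω => f n ω + f p (θ n ω) + g p (θ n ω))
      (hf (n + p)) (hsum.add hgθ) hα.le (hC0 p) (hsub n p hn hp) (hr n p hn hp)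
    rw [integral_add hsum hgθ, integral_add (hf n) hfθ, hfθ_eq, hgθ_eq] at this
    dsimp only
    linarith
  have hh : Tendsto (fun p : ℕ => (∫ ω, g p ω ∂μ + C p ^ α⁻¹) / p) atTop (𝓝 0) := by
    simpa [add_div] using hgE.add (tendsto_rpow_inv_div_of_tendsto_div_rpow (by linarith) hC0
      hCsum.tendsto_atTop_zero)
  have hbdd : IsBoundedUnder (· ≥ ·) atTop fun n : ℕ => (∫ ω, f n ω ∂μ) / n := by
    obtain ⟨m, hm⟩ := hc
    refine ⟨m, eventually_map.2 ?_⟩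
    filter_upwards [eventually_ge_atTop 1] with n hn
    obtain ⟨k, rfl⟩ := Nat.exists_eq_add_of_le' hn
    simpa using hm ⟨k, rfl⟩
  exact ⟨_, hsubE.tendsto_div_liminf hh hbdd⟩

/-- The expectation part of the almost subadditive ergodic theorem:
`E[f n] / n` converges to a finite limit. -/
theorem almost_subadditive_expectation_converges {Ω : Type*} [MeasurableSpace Ω]
    (μ : Measure Ω) [IsProbabilityMeasure μ]
    (θ : ℕ → Ω → Ω) (hθ : ∀ n, MeasurePreserving (θ n) μ μ)
    (f g : ℕ → Ω → ℝ) (r : ℕ → ℕ → Ω → ℝ)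
    (hf : ∀ n, Integrable (f n) μ)
    (hg0 : ∀ p ω, 0 ≤ g p ω) (hgint : ∀ p, Integrable (g p) μ)
    (hgE : Tendsto (fun p : ℕ => (∫ ω, g p ω ∂μ) / p) atTop (nhds 0))
    (α : ℝ) (hα : 1 < α) (C : ℕ → ℝ) (hC0 : ∀ p, 0 ≤ C p)
    (hr : ∀ n p, 1 ≤ n → 1 ≤ p →
      ∫⁻ ω, ENNReal.ofReal (max (r n p ω) 0 ^ α) ∂μ ≤ ENNReal.ofReal (C p))
    (hCsum : Summable fun p : ℕ => C p / (p : ℝ) ^ α)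
    (hsub : ∀ n p, 1 ≤ n → 1 ≤ p → ∀ ω,
      f (n + p) ω ≤ f n ω + f p (θ n ω) + g p (θ n ω) + r n p ω)
    (hc : BddBelow (Set.range fun n : ℕ => (∫ ω, f (n + 1) ω ∂μ) / (n + 1))) :
    ∃ L : ℝ, Tendsto (fun n : ℕ => (∫ ω, f n ω ∂μ) / n) atTop (nhds L) :=
  almost_subadditive_expectation_converges_general μ θ hθ f g r hf hgint hgE α hα C hC0 hr hCsum
    hsub hc
end

section
/- Under the hypotheses of the almost subadditive ergodic theorem together with the additional assumption that for every k, (1/n)·(f_{nk} - Σ_{i=0}^{n-1} f_k∘(θ_k)^i)^+ → 0 a.s., and each θ_k measure-preserving and the Birkhoff averages (1/n)Σ_{i<n} f_k∘(θ_k)^i converging a.s. and in L^1 to E[f_k | I_k], one has E[limsup_{n→∞} f_n/n] ≤ E[f_k]/k for every k, and hence E[limsup f_n/n] ≤ μ = lim E[f_n]/n. -/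
/-!
Fix `k ≥ 1` and write `n = m k + s` with `s < k`. Subadditivity at `(m k, s)` bounds `f_{mk+s}`
by the Birkhoff sum `S_m = ∑_{i<m} f_k ∘ θ_k^i` plus
`(f_{mk} - S_m)^+ + |f_s + g_s| ∘ θ_{mk} + r_{mk,s}^+`.
Each of these three terms is almost surely `o(m)`: the first by hypothesis, the second by
Borel–Cantelli because `θ_{mk}` preserves `μ` and `f_s + g_s` is integrable, the third by
Borel–Cantelli and Markov's inequality for the `α`-th moments. Dividing by `n`,
`limsup f_n / n ≤ φ_k / k` almost surely, where `φ_k` is the Birkhoff limit, and `E[φ_k] = E[f_k]`.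

To integrate this inequality the limsup must be integrable. Its negative part is handled by Fatou's
lemma: `E[(f_n/n)^-] = E[(f_n/n)^+] - E[f_n]/n` is bounded, since subadditivity with `p = 1` makes
`E[f_n^+]` grow at most linearly and `E[f_n]/n` is bounded below.
-/

open MeasureTheory Filter
open scoped Topology ENNReal

lemma eventually_atTop_of_forall_mul_add {k : ℕ} (hk : 0 < k) {P : ℕ → Prop}
    (h : ∀ s < k, ∀ᶠ m in atTop, P (m * k + s)) : ∀ᶠ n in atTop, P n := by
  obtain ⟨M, hM⟩ := eventually_atTop.1 <| (eventually_all_finite (Set.finite_Iio k)).2 h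
  refine eventually_atTop.2 ⟨M * k, fun n hn => ?_⟩
  simpa only [Nat.div_add_mod'] using
    hM (n / k) ((Nat.le_div_iff_mul_le hk).2 hn) (n % k) (Nat.mod_lt n hk)

lemma tendsto_div_mul_add_of_tendsto_div {a : ℕ → ℝ} {L : ℝ}
    (ha : Tendsto (fun m => a m / m) atTop (𝓝 L)) {k : ℕ} (hk : 0 < k) (s : ℕ) :
    Tendsto (fun m => a m / ((m * k + s : ℕ) : ℝ)) atTop (𝓝 (L / k)) := by
  have hden : Tendsto (fun m : ℕ => (k : ℝ) + s / m) atTop (𝓝 k) := by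
    simpa using tendsto_const_nhds.add (tendsto_const_div_atTop_nhds_zero_nat (s : ℝ))
  refine (ha.div hden (by positivity)).congr' ?_
  filter_upwards [eventually_ne_atTop 0] with m hm
  simp only [Pi.div_apply]
  push_cast
  field_simp

lemma eventually_div_le_of_blockwise_le {k : ℕ} (hk : 0 < k) {F S : ℕ → ℝ} {φ : ℝ}
    (hS : Tendsto (fun m => S m / m) atTop (𝓝 φ))
    (hF : ∀ s < k, ∃ e : ℕ → ℝ, Tendsto (fun m => e m / m) atTop (𝓝 0) ∧
      ∀ᶠ m in atTop, F (m * k + s) ≤ S m + e m) {ε : ℝ} (hε : 0 < ε) :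
    ∀ᶠ n in atTop, F n / n ≤ φ / k + ε := by
  refine eventually_atTop_of_forall_mul_add hk fun s hs => ?_
  obtain ⟨e, he, hFe⟩ := hF s hs
  have hlim : Tendsto (fun m => (S m + e m) / ((m * k + s : ℕ) : ℝ)) atTop (𝓝 (φ / k)) :=
    tendsto_div_mul_add_of_tendsto_div (by simpa only [add_div, add_zero] using hS.add he) hk s
  filter_upwards [hlim.eventually (gt_mem_nhds (lt_add_of_pos_right _ hε)), hFe] with m hlt hle
  exact (div_le_div_of_nonneg_right hle (Nat.cast_nonneg _)).trans hlt.le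

lemma frequently_neg_toReal_le_of_liminf_ofReal_neg_lt {ι : Type*} {l : Filter ι} {u : ι → ℝ}
    {b : ℝ≥0∞} (hb : b ≠ ∞) (h : liminf (fun n => ENNReal.ofReal (-u n)) l < b) :
    ∃ᶠ n in l, -b.toReal ≤ u n :=
  (frequently_lt_of_liminf_lt (by isBoundedDefault) h).mono fun n hn => by
    have := ENNReal.toReal_mono hb hn.le
    rw [ENNReal.toReal_ofReal'] at this
    linarith [le_max_left (-u n) 0]

lemma isCoboundedUnder_le_of_liminf_ofReal_neg_ne_top {ι : Type*} {l : Filter ι} {u : ι → ℝ}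
    (h : liminf (fun n => ENNReal.ofReal (-u n)) l ≠ ∞) : IsCoboundedUnder (· ≤ ·) l u :=
  .of_frequently_ge <| frequently_neg_toReal_le_of_liminf_ofReal_neg_lt (by simpa using h)
    (ENNReal.lt_add_right h one_ne_zero)

lemma ofReal_neg_limsup_le_liminf_ofReal_neg {ι : Type*} {l : Filter ι} {u : ι → ℝ}
    (hu : IsBoundedUnder (· ≤ ·) l u) :
    ENNReal.ofReal (-limsup u l) ≤ liminf (fun n => ENNReal.ofReal (-u n)) l := by
  refine le_of_forall_gt_imp_ge_of_dense fun b hb => ?_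
  rcases eq_or_ne b ∞ with rfl | hb'
  · exact le_top
  have hlow := le_limsup_of_frequently_le
    (frequently_neg_toReal_le_of_liminf_ofReal_neg_lt hb' hb) hu
  calc ENNReal.ofReal (-limsup u l) ≤ ENNReal.ofReal b.toReal :=
        ENNReal.ofReal_le_ofReal (by linarith)
    _ = b := ENNReal.ofReal_toReal hb'

section

variable {Ω : Type*} [MeasurableSpace Ω] {μ : Measure Ω}

lemma ae_tendsto_div_natCast_zero_of_tsum_ne_top {Y : ℕ → Ω → ℝ} (hY : ∀ m ω, 0 ≤ Y m ω)
    (hsum : ∀ ε > 0, ∑' m : ℕ, μ {ω | ε * m < Y m ω} ≠ ∞) :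
    ∀ᵐ ω ∂μ, Tendsto (fun m => Y m ω / m) atTop (𝓝 0) := by
  have hev : ∀ᵐ ω ∂μ, ∀ j : ℕ, ∀ᶠ m in atTop, Y m ω ≤ 1 / ((j : ℝ) + 1) * m := by
    refine ae_all_iff.2 fun j => ?_
    filter_upwards [ae_eventually_notMem (hsum (1 / ((j : ℝ) + 1)) (by positivity))] with ω hω
    exact hω.mono fun m hm => not_lt.1 hm
  filter_upwards [hev] with ω hω
  refine tendsto_order.2
    ⟨fun a ha => .of_forall fun m => ha.trans_le (div_nonneg (hY m ω) m.cast_nonneg),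
      fun a ha => ?_⟩
  obtain ⟨j, hj⟩ := exists_nat_one_div_lt ha
  filter_upwards [hω j, eventually_gt_atTop 0] with m hm hm0
  rw [div_lt_iff₀ (by positivity)]
  exact hm.trans_lt (mul_lt_mul_of_pos_right hj (by positivity))

lemma ae_tendsto_abs_comp_div_natCast_zero [IsProbabilityMeasure μ] {X : Ω → ℝ}
    (hX : Integrable X μ) {T : ℕ → Ω → Ω} (hT : ∀ m, MeasurePreserving (T m) μ μ) :
    ∀ᵐ ω ∂μ, Tendsto (fun m => |X (T m ω)| / m) atTop (𝓝 0) := by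
  refine ae_tendsto_div_natCast_zero_of_tsum_ne_top (fun _ _ => abs_nonneg _) fun ε hε => ?_
  -- the Mathlib tail bound is stated for the canonical measure `ℙ` of a `MeasureSpace`
  let : MeasureSpace Ω := ⟨μ⟩
  convert (ProbabilityTheory.tsum_prob_mem_Ioi_lt_top (hX.abs.div_const ε)
    fun ω => by positivity).ne using 1
  refine tsum_congr fun m => ?_
  have hmeas : NullMeasurableSet {ω | ε * m < |X ω|} μ :=
    nullMeasurableSet_lt aemeasurable_const hX.aemeasurable.abs
  calc μ {ω | ε * m < |X (T m ω)|} = μ {ω | ε * m < |X ω|} := (hT m).measure_preimage hmeas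
    _ = _ := by congr 1; ext ω; simp [lt_div_iff₀' hε]

lemma ae_tendsto_posPart_div_natCast_zero [IsFiniteMeasure μ] {R : ℕ → Ω → ℝ}
    (hR : ∀ m, Measurable (R m)) {α c : ℝ} (hα : 1 < α)
    (hRc : ∀ m, 1 ≤ m → ∫⁻ ω, ENNReal.ofReal (max (R m ω) 0 ^ α) ∂μ ≤ ENNReal.ofReal c) :
    ∀ᵐ ω ∂μ, Tendsto (fun m => max (R m ω) 0 / m) atTop (𝓝 0) := by
  refine ae_tendsto_div_natCast_zero_of_tsum_ne_top (fun _ _ => le_max_right _ _) fun ε hε => ?_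
  set b : ℕ → ℝ := fun m => (ε ^ α)⁻¹ * (((m + 1 : ℕ) : ℝ) ^ α)⁻¹
  have hb : Summable b :=
    ((summable_nat_add_iff 1).2 (Real.summable_nat_rpow_inv.2 hα)).mul_left _
  have hmarkov : ∀ m : ℕ, μ {ω | ε * (m + 1 : ℕ) < max (R (m + 1) ω) 0}
      ≤ ENNReal.ofReal c * ENNReal.ofReal (b m) := by
    intro m
    have ht : 0 < (ε * (m + 1 : ℕ)) ^ α := by positivity
    calc μ {ω | ε * (m + 1 : ℕ) < max (R (m + 1) ω) 0}
        ≤ μ {ω | ENNReal.ofReal ((ε * (m + 1 : ℕ)) ^ α)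
            ≤ ENNReal.ofReal (max (R (m + 1) ω) 0 ^ α)} :=
          measure_mono fun ω hω => ENNReal.ofReal_le_ofReal <|
            Real.rpow_le_rpow (by positivity) (le_of_lt hω) (by linarith)
      _ ≤ (∫⁻ ω, ENNReal.ofReal (max (R (m + 1) ω) 0 ^ α) ∂μ)
            / ENNReal.ofReal ((ε * (m + 1 : ℕ)) ^ α) :=
          meas_ge_le_lintegral_div
            (((hR _).max measurable_const).pow_const α).ennreal_ofReal.aemeasurable
            (by simpa using ht) ENNReal.ofReal_ne_top
      _ ≤ ENNReal.ofReal c / ENNReal.ofReal ((ε * (m + 1 : ℕ)) ^ α) := by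
          gcongr
          exact hRc _ (Nat.le_add_left 1 m)
      _ = ENNReal.ofReal c * ENNReal.ofReal (b m) := by
          rw [div_eq_mul_inv, ← ENNReal.ofReal_inv_of_pos ht, Real.mul_rpow hε.le (by positivity),
            mul_inv]
  rw [tsum_eq_zero_add' ENNReal.summable]
  refine ENNReal.add_ne_top.2
    ⟨measure_ne_top _ _, ne_top_of_le_ne_top ?_ (ENNReal.tsum_le_tsum hmarkov)⟩
  rw [ENNReal.tsum_mul_left, ← ENNReal.ofReal_tsum_of_nonneg (fun m => by positivity) hb]
  exact ENNReal.mul_ne_top ENNReal.ofReal_ne_top ENNReal.ofReal_ne_top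

lemma MeasureTheory.MeasurePreserving.lintegral_comp_of_aemeasurable {β : Type*}
    [MeasurableSpace β] {ν : Measure β} {T : Ω → β} (hT : MeasurePreserving T μ ν)
    {h : β → ℝ≥0∞} (hh : AEMeasurable h ν) : ∫⁻ ω, h (T ω) ∂μ = ∫⁻ x, h x ∂ν := by
  rw [← lintegral_map' (hT.map_eq.symm ▸ hh) hT.measurable.aemeasurable, hT.map_eq]

lemma lintegral_ofReal_le_one_add_lintegral_rpow [IsProbabilityMeasure μ] (h : Ω → ℝ) {α : ℝ}
    (hα : 1 ≤ α) :
    ∫⁻ ω, ENNReal.ofReal (h ω) ∂μ ≤ 1 + ∫⁻ ω, ENNReal.ofReal (max (h ω) 0 ^ α) ∂μ := by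
  have hpt : ∀ x : ℝ, ENNReal.ofReal x ≤ 1 + ENNReal.ofReal (max x 0 ^ α) := by
    intro x
    rcases le_total x 1 with hx | hx
    · exact (ENNReal.ofReal_le_one.2 hx).trans le_self_add
    · refine (ENNReal.ofReal_le_ofReal ?_).trans le_add_self
      rw [max_eq_left (by linarith)]
      exact Real.self_le_rpow_of_one_le hx hα
  calc ∫⁻ ω, ENNReal.ofReal (h ω) ∂μ ≤ ∫⁻ ω, (1 + ENNReal.ofReal (max (h ω) 0 ^ α)) ∂μ :=
        lintegral_mono fun ω => hpt (h ω)
    _ = 1 + ∫⁻ ω, ENNReal.ofReal (max (h ω) 0 ^ α) ∂μ := by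
        rw [lintegral_add_left measurable_const, lintegral_const, measure_univ, one_mul]

lemma lintegral_ofReal_neg_le_of_le {h : Ω → ℝ} (hh : Integrable h μ) {a b : ℝ} (ha : 0 ≤ a)
    (hpos : ∫⁻ ω, ENNReal.ofReal (h ω) ∂μ ≤ ENNReal.ofReal a) (hint : b ≤ ∫ ω, h ω ∂μ) :
    ∫⁻ ω, ENNReal.ofReal (-h ω) ∂μ ≤ ENNReal.ofReal (a - b) := by
  have hdecomp := integral_eq_lintegral_pos_part_sub_lintegral_neg_part hh
  have hpos' := ENNReal.toReal_le_of_le_ofReal ha hpos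
  have hfin : ∫⁻ ω, ENNReal.ofReal (-h ω) ∂μ ≠ ∞ := hh.neg.lintegral_lt_top.ne
  rw [← ENNReal.ofReal_toReal hfin]
  exact ENNReal.ofReal_le_ofReal (by linarith)

lemma exists_lintegral_ofReal_neg_div_natCast_le {f : ℕ → Ω → ℝ} (hf : ∀ n, Integrable (f n) μ)
    {K : ℝ≥0∞} (hK : K ≠ ∞) (hpos : ∀ n, 1 ≤ n → ∫⁻ ω, ENNReal.ofReal (f n ω) ∂μ ≤ n * K)
    (hc : BddBelow (Set.range fun n : ℕ => (∫ ω, f (n + 1) ω ∂μ) / (n + 1))) :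
    ∃ B ≠ ∞, ∀ n : ℕ, ∫⁻ ω, ENNReal.ofReal (-(f n ω / n)) ∂μ ≤ B := by
  obtain ⟨c, hc⟩ := hc
  refine ⟨ENNReal.ofReal (K.toReal - c), ENNReal.ofReal_ne_top, fun n => ?_⟩
  rcases n with _ | m
  · simp
  have hm : (0 : ℝ) < m + 1 := by positivity
  have hneg := lintegral_ofReal_neg_le_of_le (hf (m + 1)) (a := (m + 1) * K.toReal)
    (b := (m + 1) * c) (by positivity)
    (by rw [ENNReal.ofReal_mul hm.le, ENNReal.ofReal_toReal hK]; exact_mod_cast hpos _ (by omega))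
    (by have := hc ⟨m, rfl⟩; rwa [le_div_iff₀ hm, mul_comm] at this)
  calc ∫⁻ ω, ENNReal.ofReal (-(f (m + 1) ω / (m + 1 : ℕ))) ∂μ
      = ∫⁻ ω, ENNReal.ofReal (m + 1)⁻¹ * ENNReal.ofReal (-f (m + 1) ω) ∂μ := by
        refine lintegral_congr fun ω => ?_
        rw [← ENNReal.ofReal_mul (by positivity)]
        push_cast
        ring_nf
    _ = ENNReal.ofReal (m + 1)⁻¹ * ∫⁻ ω, ENNReal.ofReal (-f (m + 1) ω) ∂μ :=
        lintegral_const_mul' _ _ ENNReal.ofReal_ne_top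
    _ ≤ ENNReal.ofReal (m + 1)⁻¹ * ENNReal.ofReal ((m + 1) * K.toReal - (m + 1) * c) := by
        gcongr
    _ = ENNReal.ofReal (K.toReal - c) := by
        rw [← ENNReal.ofReal_mul (by positivity)]
        congr 1
        field_simp

lemma integrable_of_le_of_lintegral_ofReal_neg_ne_top {ψ φ : Ω → ℝ}
    (hψ : AEStronglyMeasurable ψ μ) (hφ : Integrable φ μ) (hle : ψ ≤ᵐ[μ] φ)
    (hneg : ∫⁻ ω, ENNReal.ofReal (-ψ ω) ∂μ ≠ ∞) : Integrable ψ μ := by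
  have hnegint : Integrable (fun ω => (ENNReal.ofReal (-ψ ω)).toReal) μ :=
    integrable_toReal_of_lintegral_ne_top hψ.aemeasurable.neg.ennreal_ofReal hneg
  refine (hφ.abs.add hnegint).mono' hψ ?_
  filter_upwards [hle] with ω hω
  rw [Real.norm_eq_abs, Pi.add_apply, ENNReal.toReal_ofReal']
  refine abs_le.2 ⟨?_, ?_⟩ <;>
    linarith [le_abs_self (φ ω), abs_nonneg (φ ω), le_max_left (-ψ ω) 0, le_max_right (-ψ ω) 0]

theorem integral_limsup_le_of_eventually_le {u : ℕ → Ω → ℝ} (hu : ∀ n, Measurable (u n))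
    {φ : Ω → ℝ} (hφ : Integrable φ μ)
    (hup : ∀ᵐ ω ∂μ, ∀ ε > 0, ∀ᶠ n in atTop, u n ω ≤ φ ω + ε)
    {B : ℝ≥0∞} (hB : B ≠ ∞) (hneg : ∀ n, ∫⁻ ω, ENNReal.ofReal (-u n ω) ∂μ ≤ B) :
    ∫ ω, limsup (u · ω) atTop ∂μ ≤ ∫ ω, φ ω ∂μ := by
  set Λ : Ω → ℝ≥0∞ := fun ω => liminf (fun n => ENNReal.ofReal (-u n ω)) atTop
  have hv : ∀ n, Measurable fun ω => ENNReal.ofReal (-u n ω) := fun n => (hu n).neg.ennreal_ofReal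
  have hΛ : ∫⁻ ω, Λ ω ∂μ ≤ B :=
    (lintegral_liminf_le hv).trans (liminf_le_of_frequently_le' (.of_forall hneg))
  have hΛfin : ∀ᵐ ω ∂μ, Λ ω ≠ ∞ :=
    (ae_lt_top (.liminf hv) (ne_top_of_le_ne_top hB hΛ)).mono fun _ => ne_of_lt
  have hbdd : ∀ᵐ ω ∂μ, IsBoundedUnder (· ≤ ·) atTop (u · ω) :=
    hup.mono fun ω hω => ⟨_, hω 1 one_pos⟩
  have hle : ∀ᵐ ω ∂μ, limsup (u · ω) atTop ≤ φ ω := by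
    filter_upwards [hup, hΛfin] with ω hω hωΛ
    exact le_of_forall_pos_le_add fun ε hε =>
      limsup_le_of_le (isCoboundedUnder_le_of_liminf_ofReal_neg_ne_top hωΛ) (hω ε hε)
  have hnegψ : ∫⁻ ω, ENNReal.ofReal (-limsup (u · ω) atTop) ∂μ ≠ ∞ :=
    ne_top_of_le_ne_top (ne_top_of_le_ne_top hB hΛ) <| lintegral_mono_ae <|
      hbdd.mono fun ω hω => ofReal_neg_limsup_le_liminf_ofReal_neg hω
  exact integral_mono_ae (integrable_of_le_of_lintegral_ofReal_neg_ne_top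
    (Measurable.limsup hu).aestronglyMeasurable hφ hle hnegψ) hφ hle

namespace AlmostSubadditive

lemma exists_lintegral_ofReal_le_natCast_mul [IsProbabilityMeasure μ] {θ : ℕ → Ω → Ω}
    (hθ : ∀ n, MeasurePreserving (θ n) μ μ) {f g : ℕ → Ω → ℝ} {r : ℕ → ℕ → Ω → ℝ}
    (hfmeas : ∀ n, Measurable (f n)) (hf1 : Integrable (f 1) μ) (hg1 : Integrable (g 1) μ)
    {α C : ℝ} (hα : 1 ≤ α)
    (hr : ∀ n, 1 ≤ n → ∫⁻ ω, ENNReal.ofReal (max (r n 1 ω) 0 ^ α) ∂μ ≤ ENNReal.ofReal C)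
    (hrmeas : ∀ n, Measurable (r n 1))
    (hsub : ∀ n, 1 ≤ n → ∀ ω, f (n + 1) ω ≤ f n ω + f 1 (θ n ω) + g 1 (θ n ω) + r n 1 ω) :
    ∃ K ≠ ∞, ∀ n, 1 ≤ n → ∫⁻ ω, ENNReal.ofReal (f n ω) ∂μ ≤ n * K := by
  set X : Ω → ℝ := fun ω => f 1 ω + g 1 ω
  have hX : Integrable X μ := hf1.add hg1
  set K' := ∫⁻ ω, ENNReal.ofReal (X ω) ∂μ + (1 + ENNReal.ofReal C)
  have hK' : K' ≠ ∞ :=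
    ENNReal.add_ne_top.2 ⟨hX.lintegral_lt_top.ne,
      ENNReal.add_ne_top.2 ⟨ENNReal.one_ne_top, ENNReal.ofReal_ne_top⟩⟩
  have hstep : ∀ n, 1 ≤ n →
      ∫⁻ ω, ENNReal.ofReal (f (n + 1) ω) ∂μ ≤ ∫⁻ ω, ENNReal.ofReal (f n ω) ∂μ + K' := by
    intro n hn
    calc ∫⁻ ω, ENNReal.ofReal (f (n + 1) ω) ∂μ
        ≤ ∫⁻ ω, (ENNReal.ofReal (f n ω) + ENNReal.ofReal (X (θ n ω))
            + ENNReal.ofReal (r n 1 ω)) ∂μ := by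
          refine lintegral_mono fun ω => ?_
          calc ENNReal.ofReal (f (n + 1) ω) ≤ ENNReal.ofReal (f n ω + X (θ n ω) + r n 1 ω) :=
                ENNReal.ofReal_le_ofReal (by simpa only [X, add_assoc] using hsub n hn ω)
            _ ≤ _ := ENNReal.ofReal_add_le.trans (by gcongr; exact ENNReal.ofReal_add_le)
      _ = ∫⁻ ω, ENNReal.ofReal (f n ω) ∂μ + ∫⁻ ω, ENNReal.ofReal (X ω) ∂μ
            + ∫⁻ ω, ENNReal.ofReal (r n 1 ω) ∂μ := by
          rw [lintegral_add_right _ (hrmeas n).ennreal_ofReal,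
            lintegral_add_left (hfmeas n).ennreal_ofReal,
            (hθ n).lintegral_comp_of_aemeasurable hX.aemeasurable.ennreal_ofReal]
      _ ≤ ∫⁻ ω, ENNReal.ofReal (f n ω) ∂μ + K' := by
          rw [add_assoc]
          have hrn := (lintegral_ofReal_le_one_add_lintegral_rpow (μ := μ) (r n 1) hα).trans
            (add_le_add_right (hr n hn) 1)
          exact add_le_add_right (add_le_add_right hrn _) _
  refine ⟨∫⁻ ω, ENNReal.ofReal (f 1 ω) ∂μ + K', ENNReal.add_ne_top.2 ⟨hf1.lintegral_lt_top.ne, hK'⟩,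
    fun n hn => ?_⟩
  induction n, hn using Nat.le_induction with
  | base => simp
  | succ n hn ih =>
    calc ∫⁻ ω, ENNReal.ofReal (f (n + 1) ω) ∂μ
        ≤ n * (∫⁻ ω, ENNReal.ofReal (f 1 ω) ∂μ + K') + (∫⁻ ω, ENNReal.ofReal (f 1 ω) ∂μ + K') :=
          (hstep n hn).trans (add_le_add ih le_add_self)
      _ = ((n + 1 : ℕ) : ℝ≥0∞) * (∫⁻ ω, ENNReal.ofReal (f 1 ω) ∂μ + K') := by push_cast; ring

lemma ae_eventually_div_le_birkhoff_limit [IsProbabilityMeasure μ] {θ : ℕ → Ω → Ω}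
    (hθ : ∀ n, MeasurePreserving (θ n) μ μ) {f g : ℕ → Ω → ℝ} {r : ℕ → ℕ → Ω → ℝ}
    (hf : ∀ n, Integrable (f n) μ) (hg : ∀ p, Integrable (g p) μ) {α : ℝ} (hα : 1 < α)
    {C : ℕ → ℝ}
    (hr : ∀ n p, 1 ≤ n → 1 ≤ p →
      ∫⁻ ω, ENNReal.ofReal (max (r n p ω) 0 ^ α) ∂μ ≤ ENNReal.ofReal (C p))
    (hrmeas : ∀ n p, Measurable (r n p))
    (hsub : ∀ n p, 1 ≤ n → 1 ≤ p → ∀ ω,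
      f (n + p) ω ≤ f n ω + f p (θ n ω) + g p (θ n ω) + r n p ω)
    {k : ℕ} (hk : 1 ≤ k)
    (hblock : ∀ᵐ ω ∂μ, Tendsto (fun m : ℕ =>
      max (f (m * k) ω - ∑ i ∈ Finset.range m, f k ((θ k)^[i] ω)) 0 / m) atTop (𝓝 0))
    {φ : Ω → ℝ} (hφ : ∀ᵐ ω ∂μ, Tendsto (fun m : ℕ =>
      (∑ i ∈ Finset.range m, f k ((θ k)^[i] ω)) / m) atTop (𝓝 (φ ω))) :
    ∀ᵐ ω ∂μ, ∀ ε > 0, ∀ᶠ n in atTop, f n ω / n ≤ φ ω / k + ε := by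
  have hX : ∀ᵐ ω ∂μ, ∀ s, Tendsto
      (fun m : ℕ => |f s (θ (m * k) ω) + g s (θ (m * k) ω)| / m) atTop (𝓝 0) :=
    ae_all_iff.2 fun s => ae_tendsto_abs_comp_div_natCast_zero ((hf s).add (hg s))
      fun m => hθ (m * k)
  have hR : ∀ᵐ ω ∂μ, ∀ s, 1 ≤ s →
      Tendsto (fun m : ℕ => max (r (m * k) s ω) 0 / m) atTop (𝓝 0) :=
    ae_all_iff.2 fun s => eventually_imp_distrib_left.2 fun hs =>
      ae_tendsto_posPart_div_natCast_zero (fun m => hrmeas _ _) hα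
        fun m hm => hr _ _ (Nat.mul_pos hm hk) hs
  filter_upwards [hblock, hφ, hX, hR] with ω hD hS hXω hRω ε hε
  set S := fun m : ℕ => ∑ i ∈ Finset.range m, f k ((θ k)^[i] ω)
  set D := fun m : ℕ => max (f (m * k) ω - S m) 0
  refine eventually_div_le_of_blockwise_le hk hS (fun s _ => ?_) hε
  rcases Nat.eq_zero_or_pos s with rfl | hs
  · refine ⟨D, hD, .of_forall fun m => ?_⟩
    simp only [D, add_zero]
    linarith [le_max_left (f (m * k) ω - S m) 0]
  refine ⟨fun m => D m + |f s (θ (m * k) ω) + g s (θ (m * k) ω)| + max (r (m * k) s ω) 0,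
    by simpa only [add_div, add_zero] using (hD.add (hXω s)).add (hRω s hs), ?_⟩
  filter_upwards [eventually_ge_atTop 1] with m hm
  linarith [hsub (m * k) s (Nat.mul_pos hm hk) hs ω, le_max_left (f (m * k) ω - S m) 0,
    le_abs_self (f s (θ (m * k) ω) + g s (θ (m * k) ω)), le_max_left (r (m * k) s ω) 0]

end AlmostSubadditive

end

open AlmostSubadditive in
theorem limsup_expectation_bound_almost_subadditive_general {Ω : Type*} [MeasurableSpace Ω]
    (μ : Measure Ω) [IsProbabilityMeasure μ]
    (θ : ℕ → Ω → Ω) (hθ : ∀ n, MeasurePreserving (θ n) μ μ)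
    (f g : ℕ → Ω → ℝ) (r : ℕ → ℕ → Ω → ℝ)
    (hfmeas : ∀ n, Measurable (f n)) (hf : ∀ n, Integrable (f n) μ)
    (hgint : ∀ p, Integrable (g p) μ)
    (α : ℝ) (hα : 1 < α) (C : ℕ → ℝ)
    (hr : ∀ n p, 1 ≤ n → 1 ≤ p →
      ∫⁻ ω, ENNReal.ofReal (max (r n p ω) 0 ^ α) ∂μ ≤ ENNReal.ofReal (C p))
    (hrmeas : ∀ n p, Measurable (r n p))
    (hsub : ∀ n p, 1 ≤ n → 1 ≤ p → ∀ ω,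
      f (n + p) ω ≤ f n ω + f p (θ n ω) + g p (θ n ω) + r n p ω)
    (hc : BddBelow (Set.range fun n : ℕ => (∫ ω, f (n + 1) ω ∂μ) / (n + 1)))
    (hextra : ∀ k : ℕ, 1 ≤ k → ∀ᵐ ω ∂μ,
      Tendsto (fun n : ℕ =>
        max (f (n * k) ω - ∑ i ∈ Finset.range n, f k ((θ k)^[i] ω)) 0 / n)
        atTop (nhds 0))
    (hbirk : ∀ k : ℕ, 1 ≤ k → ∃ φ : Ω → ℝ, Integrable φ μ ∧
      (∫ ω, φ ω ∂μ) = (∫ ω, f k ω ∂μ) ∧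
      (∀ᵐ ω ∂μ, Tendsto (fun n : ℕ =>
        (∑ i ∈ Finset.range n, f k ((θ k)^[i] ω)) / n) atTop (nhds (φ ω))) ∧
      Tendsto (fun n : ℕ =>
        ∫ ω, |(∑ i ∈ Finset.range n, f k ((θ k)^[i] ω)) / n - φ ω| ∂μ)
        atTop (nhds 0)) :
    (∀ k : ℕ, 1 ≤ k →
      ∫ ω, atTop.limsup (fun n : ℕ => f n ω / n) ∂μ ≤ (∫ ω, f k ω ∂μ) / k) ∧
    ∀ L : ℝ, Tendsto (fun n : ℕ => (∫ ω, f n ω ∂μ) / n) atTop (nhds L) →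
      ∫ ω, atTop.limsup (fun n : ℕ => f n ω / n) ∂μ ≤ L := by
  obtain ⟨K, hK, hpos⟩ := exists_lintegral_ofReal_le_natCast_mul hθ hfmeas (hf 1) (hgint 1)
    hα.le (fun n hn => hr n 1 hn le_rfl) (fun n => hrmeas n 1) (fun n hn => hsub n 1 hn le_rfl)
  obtain ⟨B, hB, hneg⟩ := exists_lintegral_ofReal_neg_div_natCast_le hf hK hpos hc
  have hbound : ∀ k, 1 ≤ k →
      ∫ ω, atTop.limsup (fun n : ℕ => f n ω / n) ∂μ ≤ (∫ ω, f k ω ∂μ) / k := by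
    intro k hk
    obtain ⟨φ, hφint, hφeq, hφ, -⟩ := hbirk k hk
    calc ∫ ω, atTop.limsup (fun n : ℕ => f n ω / n) ∂μ ≤ ∫ ω, φ ω / k ∂μ :=
          integral_limsup_le_of_eventually_le (fun n => (hfmeas n).div_const _)
            (hφint.div_const _) (ae_eventually_div_le_birkhoff_limit hθ hf hgint hα hr hrmeas
              hsub hk (hextra k hk) hφ) hB hneg
      _ = (∫ ω, f k ω ∂μ) / k := by rw [integral_div, hφeq]
  exact ⟨hbound, fun L hL => ge_of_tendsto hL ((eventually_ge_atTop 1).mono hbound)⟩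

/-- Upper-bound half of the almost-sure convergence in the almost subadditive ergodic
theorem: `E[limsup f_n/n] ≤ E[f_k]/k` for every `k ≥ 1`, hence `E[limsup f_n/n] ≤ μ`. -/
theorem limsup_expectation_bound_almost_subadditive {Ω : Type*} [MeasurableSpace Ω]
    (μ : Measure Ω) [IsProbabilityMeasure μ]
    (θ : ℕ → Ω → Ω) (hθ : ∀ n, MeasurePreserving (θ n) μ μ)
    (f g : ℕ → Ω → ℝ) (r : ℕ → ℕ → Ω → ℝ)
    (hfmeas : ∀ n, Measurable (f n)) (hf : ∀ n, Integrable (f n) μ)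
    (hg0 : ∀ p ω, 0 ≤ g p ω) (hgint : ∀ p, Integrable (g p) μ)
    (hgE : Tendsto (fun p : ℕ => (∫ ω, g p ω ∂μ) / p) atTop (nhds 0))
    (hgas : ∀ᵐ ω ∂μ, Tendsto (fun p : ℕ => g p ω / p) atTop (nhds 0))
    (α : ℝ) (hα : 1 < α) (C : ℕ → ℝ) (hC0 : ∀ p, 0 ≤ C p)
    (hr : ∀ n p, 1 ≤ n → 1 ≤ p →
      ∫⁻ ω, ENNReal.ofReal (max (r n p ω) 0 ^ α) ∂μ ≤ ENNReal.ofReal (C p))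
    (hrmeas : ∀ n p, Measurable (r n p))
    (hCsum : Summable fun p : ℕ => C p / (p : ℝ) ^ α)
    (hsub : ∀ n p, 1 ≤ n → 1 ≤ p → ∀ ω,
      f (n + p) ω ≤ f n ω + f p (θ n ω) + g p (θ n ω) + r n p ω)
    (hc : BddBelow (Set.range fun n : ℕ => (∫ ω, f (n + 1) ω ∂μ) / (n + 1)))
    (hextra : ∀ k : ℕ, 1 ≤ k → ∀ᵐ ω ∂μ,
      Tendsto (fun n : ℕ =>
        max (f (n * k) ω - ∑ i ∈ Finset.range n, f k ((θ k)^[i] ω)) 0 / n)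
        atTop (nhds 0))
    (hbirk : ∀ k : ℕ, 1 ≤ k → ∃ φ : Ω → ℝ, Integrable φ μ ∧
      (∫ ω, φ ω ∂μ) = (∫ ω, f k ω ∂μ) ∧
      (∀ᵐ ω ∂μ, Tendsto (fun n : ℕ =>
        (∑ i ∈ Finset.range n, f k ((θ k)^[i] ω)) / n) atTop (nhds (φ ω))) ∧
      Tendsto (fun n : ℕ =>
        ∫ ω, |(∑ i ∈ Finset.range n, f k ((θ k)^[i] ω)) / n - φ ω| ∂μ)
        atTop (nhds 0)) :
    (∀ k : ℕ, 1 ≤ k →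
      ∫ ω, atTop.limsup (fun n : ℕ => f n ω / n) ∂μ ≤ (∫ ω, f k ω ∂μ) / k) ∧
    ∀ L : ℝ, Tendsto (fun n : ℕ => (∫ ω, f n ω ∂μ) / n) atTop (nhds L) →
      ∫ ω, atTop.limsup (fun n : ℕ => f n ω / n) ∂μ ≤ L :=
  limsup_expectation_bound_almost_subadditive_general μ θ hθ f g r hfmeas hf hgint α hα C hr hrmeas
    hsub hc hextra hbirk
end
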